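/- Let a, b be real numbers with a > -1, |b| < 1 and |b| < 1 + a, set κ_{a,b} = 1/((1+b)Β(a+1,b+1)), and for s, ε > 0 define h_s(ε) = (1/Β(a+1,b+1)) ∫_s^{s+ε} u^a (s+ε-u)^b du - κ_{a,b} ε^{1+b} s^a. Then: (i) if a > 1, there is C = C(a,b) > 0 with |h_s(ε)| ≤ C (s+ε)^{a-1} ε^{2+b} for all s, ε > 0; (ii) if 0 < a ≤ 1, there is C = C(a,b) > 0 with |h_s(ε)| ≤ C ε^{1+a+b} for all s, ε > 0; (iii) if -1 < a < 0, then for every ν with 0 < ν < 1+a there is C = C(a,b,ν) > 0 with |h_s(ε)| ≤ C s^{a-ν} ε^{1+b+ν} for all s, ε > 0. -/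

import Mathlib

open Real MeasureTheory

/-- The Euler Beta function. -/
noncomputable def Beta (x y : ℝ) : ℝ := Real.Gamma x * Real.Gamma y / Real.Gamma (x + y)

/-- `h_s(ε) = E[(B^{a,b}_{s+ε} - B^{a,b}_s)²] - κ_{a,b} ε^{1+b} s^a`. -/
noncomputable def h (a b s ε : ℝ) : ℝ :=
  (1 / Beta (a + 1) (b + 1)) * (∫ u in s..(s + ε), u ^ a * (s + ε - u) ^ b) -
    (1 / ((1 + b) * Beta (a + 1) (b + 1))) * ε ^ (1 + b) * s ^ a

/-!
Since `∫_s^{s+ε} (s+ε-u)^b du = ε^{1+b}/(1+b)`, we have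
`h_s(ε) = B⁻¹ ∫_s^{s+ε} (u^a - s^a) (s+ε-u)^b du`, hence
`|h_s(ε)| ≤ κ_{a,b} ε^{1+b} sup_{u ∈ [s, s+ε]} |u^a - s^a|`. The three regimes are bounds on this
increment of `u ↦ u^a`: the tangent-line bound of a convex power (`a ≥ 1`), subadditivity
(`0 ≤ a ≤ 1`), and for `-1 ≤ a ≤ 0` the estimate `1 - (1+x)^a ≤ 1 - (1+x)⁻¹ ≤ min(x, 1) ≤ x^ν`.
-/

open Set

lemma Beta_pos {x y : ℝ} (hx : 0 < x) (hy : 0 < y) : 0 < Beta x y := by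
  unfold Beta
  have := Gamma_pos_of_pos (add_pos hx hy)
  have := Gamma_pos_of_pos hx
  have := Gamma_pos_of_pos hy
  positivity

lemma intervalIntegrable_sub_rpow {b : ℝ} (hb : -1 < b) (s c : ℝ) :
    IntervalIntegrable (fun u => (c - u) ^ b) volume s c := by
  simpa using
    ((intervalIntegral.intervalIntegrable_rpow' (a := 0) (b := c - s) hb).comp_sub_left c).symm

lemma integral_sub_rpow {b : ℝ} (hb : -1 < b) (s c : ℝ) :
    ∫ u in s..c, (c - u) ^ b = (c - s) ^ (b + 1) / (b + 1) := by
  rw [intervalIntegral.integral_comp_sub_left (fun u => u ^ b), sub_self,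
    integral_rpow (Or.inl hb), zero_rpow (by linarith), sub_zero]

lemma abs_integral_mul_sub_rpow_le {b s c M : ℝ} {f : ℝ → ℝ} (hb : -1 < b) (hsc : s ≤ c)
    (hf : ∀ u ∈ Icc s c, |f u| ≤ M) :
    |∫ u in s..c, f u * (c - u) ^ b| ≤ M * (c - s) ^ (b + 1) / (b + 1) := by
  have hbound : ∀ᵐ u ∂volume, u ∈ Ioc s c → ‖f u * (c - u) ^ b‖ ≤ M * (c - u) ^ b := by
    refine Filter.Eventually.of_forall fun u hu => ?_
    have hcu : 0 ≤ c - u := sub_nonneg.2 hu.2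
    rw [norm_mul, norm_of_nonneg (rpow_nonneg hcu b)]
    exact mul_le_mul_of_nonneg_right (hf u (Ioc_subset_Icc_self hu)) (rpow_nonneg hcu b)
  have := intervalIntegral.norm_integral_le_of_norm_le hsc hbound
    ((intervalIntegrable_sub_rpow hb s c).const_mul M)
  rwa [intervalIntegral.integral_const_mul, integral_sub_rpow hb, ← mul_div_assoc] at this

noncomputable def kappa (a b : ℝ) : ℝ := 1 / ((1 + b) * Beta (a + 1) (b + 1))

lemma kappa_pos {a b : ℝ} (ha : -1 < a) (hb : -1 < b) : 0 < kappa a b := by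
  have := Beta_pos (x := a + 1) (y := b + 1) (by linarith) (by linarith)
  have : 0 < 1 + b := by linarith
  unfold kappa; positivity

lemma h_eq_integral {a b s ε : ℝ} (hb : -1 < b) (hs : 0 < s) (hε : 0 ≤ ε) :
    h a b s ε = (1 / Beta (a + 1) (b + 1)) *
      ∫ u in s..(s + ε), (u ^ a - s ^ a) * (s + ε - u) ^ b := by
  have hcont : ContinuousOn (fun u : ℝ => u ^ a) (uIcc s (s + ε)) := by
    refine continuousOn_id.rpow_const fun u hu => Or.inl ?_
    rw [uIcc_of_le (by linarith)] at hu
    exact (hs.trans_le hu.1).ne'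
  have hI := intervalIntegrable_sub_rpow hb s (s + ε)
  simp_rw [sub_mul]
  rw [intervalIntegral.integral_sub (hI.continuousOn_mul hcont) (hI.const_mul _),
    intervalIntegral.integral_const_mul, integral_sub_rpow hb, add_sub_cancel_left, h]
  have : (1 + b) ≠ 0 := by linarith
  rw [add_comm b 1]
  field_simp

lemma abs_h_le {a b s ε M : ℝ} (ha : -1 < a) (hb : -1 < b) (hs : 0 < s) (hε : 0 ≤ ε)
    (hM : ∀ u ∈ Icc s (s + ε), |u ^ a - s ^ a| ≤ M) :
    |h a b s ε| ≤ kappa a b * M * ε ^ (1 + b) := by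
  have hB := Beta_pos (x := a + 1) (y := b + 1) (by linarith) (by linarith)
  rw [h_eq_integral hb hs hε, abs_mul, abs_of_pos (by positivity)]
  calc 1 / Beta (a + 1) (b + 1) * |∫ u in s..(s + ε), (u ^ a - s ^ a) * (s + ε - u) ^ b|
      ≤ 1 / Beta (a + 1) (b + 1) * (M * (s + ε - s) ^ (b + 1) / (b + 1)) :=
        mul_le_mul_of_nonneg_left (abs_integral_mul_sub_rpow_le hb (by linarith) hM)
          (by positivity)
    _ = kappa a b * M * ε ^ (1 + b) := by
        rw [kappa, add_sub_cancel_left, add_comm b 1]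
        field_simp

lemma rpow_sub_rpow_le_mul_of_one_le {a s u : ℝ} (ha : 1 ≤ a) (hs : 0 ≤ s) (hsu : s ≤ u) :
    u ^ a - s ^ a ≤ a * u ^ (a - 1) * (u - s) := by
  rcases hsu.eq_or_lt with rfl | hlt
  · simp
  have hslope := (convexOn_rpow ha).slope_le_of_hasDerivAt hs (hs.trans hlt.le) hlt
    (hasDerivAt_rpow_const (Or.inl (hs.trans_lt hlt).ne'))
  rwa [slope_def_field, div_le_iff₀ (sub_pos.2 hlt)] at hslope

lemma one_sub_one_add_rpow_le {a x ν : ℝ} (ha : -1 ≤ a) (hx : 0 ≤ x) (hν₀ : 0 ≤ ν)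
    (hν₁ : ν ≤ 1) : 1 - (1 + x) ^ a ≤ x ^ ν := by
  have hinv : (1 + x)⁻¹ ≤ (1 + x) ^ a := by
    rw [← rpow_neg_one]
    exact rpow_le_rpow_of_exponent_le (by linarith) ha
  have hfrac : 1 - (1 + x)⁻¹ = x / (1 + x) := by field_simp; ring
  rcases le_total x 1 with hx1 | hx1
  · calc 1 - (1 + x) ^ a ≤ x / (1 + x) := by linarith
      _ ≤ x := div_le_self hx (by linarith)
      _ = x ^ (1 : ℝ) := (rpow_one x).symm
      _ ≤ x ^ ν := rpow_le_rpow_of_exponent_ge' hx hx1 hν₀ hν₁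
  · calc 1 - (1 + x) ^ a ≤ x / (1 + x) := by linarith
      _ ≤ 1 := (div_le_one (by linarith)).2 (by linarith)
      _ ≤ x ^ ν := one_le_rpow hx1 hν₀

lemma rpow_sub_rpow_le_rpow_mul_rpow {a s u ν : ℝ} (ha : -1 ≤ a) (hs : 0 < s) (hsu : s ≤ u)
    (hν₀ : 0 ≤ ν) (hν₁ : ν ≤ 1) : s ^ a - u ^ a ≤ s ^ (a - ν) * (u - s) ^ ν := by
  obtain ⟨x, hx, rfl⟩ : ∃ x, 0 ≤ x ∧ u = s * (1 + x) :=
    ⟨(u - s) / s, div_nonneg (by linarith) hs.le, by field_simp; ring⟩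
  have hsx : s * (1 + x) - s = s * x := by ring
  have hscale : s ^ a / s ^ ν * (s ^ ν * x ^ ν) = s ^ a * x ^ ν := by
    field_simp [(rpow_pos_of_pos hs ν).ne']
  rw [hsx, mul_rpow hs.le (by linarith), mul_rpow hs.le hx, rpow_sub hs, hscale]
  have := one_sub_one_add_rpow_le ha hx hν₀ hν₁
  have := rpow_nonneg hs.le a
  nlinarith

section Estimates

variable {a b s ε : ℝ}

lemma abs_h_le_of_one_le (ha : 1 ≤ a) (hb : -1 < b) (hs : 0 < s) (hε : 0 < ε) :
    |h a b s ε| ≤ a * kappa a b * (s + ε) ^ (a - 1) * ε ^ (2 + b) := by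
  have hM : ∀ u ∈ Icc s (s + ε), |u ^ a - s ^ a| ≤ a * (s + ε) ^ (a - 1) * ε := by
    intro u hu
    rw [abs_of_nonneg (sub_nonneg.2 (rpow_le_rpow hs.le hu.1 (by linarith)))]
    refine (rpow_sub_rpow_le_mul_of_one_le ha hs.le hu.1).trans ?_
    have : 0 ≤ u := hs.le.trans hu.1
    gcongr <;> linarith [hu.1, hu.2]
  refine (abs_h_le (by linarith) hb hs hε.le hM).trans_eq ?_
  rw [show 2 + b = (1 + b) + 1 by ring, rpow_add_one hε.ne']
  ring

lemma abs_h_le_of_nonneg_of_le_one (ha₀ : 0 ≤ a) (ha₁ : a ≤ 1) (hb : -1 < b) (hs : 0 < s)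
    (hε : 0 < ε) : |h a b s ε| ≤ kappa a b * ε ^ (1 + a + b) := by
  have hM : ∀ u ∈ Icc s (s + ε), |u ^ a - s ^ a| ≤ ε ^ a := by
    intro u hu
    rw [abs_of_nonneg (sub_nonneg.2 (rpow_le_rpow hs.le hu.1 ha₀))]
    have hsub := rpow_add_le_add_rpow hs.le (sub_nonneg.2 hu.1) ha₀ ha₁
    rw [add_sub_cancel] at hsub
    have : (u - s) ^ a ≤ ε ^ a := rpow_le_rpow (by linarith [hu.1]) (by linarith [hu.2]) ha₀
    linarith
  refine (abs_h_le (by linarith) hb hs hε.le hM).trans_eq ?_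
  rw [show 1 + a + b = (1 + b) + a by ring, rpow_add hε (1 + b) a]
  ring

lemma abs_h_le_of_nonpos (ha₀ : -1 < a) (ha₁ : a ≤ 0) {ν : ℝ} (hν₀ : 0 ≤ ν) (hν₁ : ν ≤ 1)
    (hb : -1 < b) (hs : 0 < s) (hε : 0 < ε) :
    |h a b s ε| ≤ kappa a b * s ^ (a - ν) * ε ^ (1 + b + ν) := by
  have hM : ∀ u ∈ Icc s (s + ε), |u ^ a - s ^ a| ≤ s ^ (a - ν) * ε ^ ν := by
    intro u hu
    rw [abs_sub_comm, abs_of_nonneg (sub_nonneg.2 (rpow_le_rpow_of_nonpos hs hu.1 ha₁))]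
    refine (rpow_sub_rpow_le_rpow_mul_rpow ha₀.le hs hu.1 hν₀ hν₁).trans ?_
    gcongr <;> linarith [hu.1, hu.2]
  refine (abs_h_le ha₀ hb hs hε.le hM).trans_eq ?_
  rw [show 1 + b + ν = (1 + b) + ν by ring, rpow_add hε (1 + b) ν]
  ring

end Estimates

theorem stmt_15_general (a b : ℝ) (ha : -1 < a) (hb1 : |b| < 1) :
    (1 < a → ∃ C > (0:ℝ), ∀ s > (0:ℝ), ∀ ε > (0:ℝ),
        |h a b s ε| ≤ C * (s + ε) ^ (a - 1) * ε ^ (2 + b)) ∧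
      (0 < a ∧ a ≤ 1 → ∃ C > (0:ℝ), ∀ s > (0:ℝ), ∀ ε > (0:ℝ),
        |h a b s ε| ≤ C * ε ^ (1 + a + b)) ∧
      (-1 < a ∧ a < 0 → ∀ ν : ℝ, 0 < ν → ν < 1 + a → ∃ C > (0:ℝ), ∀ s > (0:ℝ), ∀ ε > (0:ℝ),
        |h a b s ε| ≤ C * s ^ (a - ν) * ε ^ (1 + b + ν)) := by
  have hb : -1 < b := (abs_lt.1 hb1).1
  have hκ := kappa_pos ha hb
  refine ⟨fun ha₁ => ?_, fun ⟨ha₀, ha₁⟩ => ?_, fun ⟨_, ha₀⟩ ν hν₀ hν₁ => ?_⟩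
  · exact ⟨a * kappa a b, by positivity, fun s hs ε hε => abs_h_le_of_one_le ha₁.le hb hs hε⟩
  · exact ⟨kappa a b, hκ, fun s hs ε hε => abs_h_le_of_nonneg_of_le_one ha₀.le ha₁ hb hs hε⟩
  · exact ⟨kappa a b, hκ, fun s hs ε hε =>
      abs_h_le_of_nonpos ha ha₀.le hν₀.le (by linarith) hb hs hε⟩

theorem stmt_15 (a b : ℝ) (ha : -1 < a) (hb1 : |b| < 1) (hb2 : |b| < 1 + a) :
    (1 < a → ∃ C > (0:ℝ), ∀ s > (0:ℝ), ∀ ε > (0:ℝ),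
        |h a b s ε| ≤ C * (s + ε) ^ (a - 1) * ε ^ (2 + b)) ∧
      (0 < a ∧ a ≤ 1 → ∃ C > (0:ℝ), ∀ s > (0:ℝ), ∀ ε > (0:ℝ),
        |h a b s ε| ≤ C * ε ^ (1 + a + b)) ∧
      (-1 < a ∧ a < 0 → ∀ ν : ℝ, 0 < ν → ν < 1 + a → ∃ C > (0:ℝ), ∀ s > (0:ℝ), ∀ ε > (0:ℝ),
        |h a b s ε| ≤ C * s ^ (a - ν) * ε ^ (1 + b + ν)) :=
  stmt_15_general a b ha hb1
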